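/- arXiv:1008.5359 — 2 statements merged into one kernel-verified Lean document; each statement's English description precedes it below -/
import Mathlib

section
/- Fix a directed graph C and a phase space function 𝒫: C₀ → Euc. For every étale map φ: Γ → Γ' of finite graphs over C there exists a unique linear map 𝕍(φ): 𝕍(Γ') → 𝕍(Γ) satisfying ϖ_a ∘ 𝕍(φ) = Ctrl(φ_a)⁻¹ ∘ ϖ_{φ(a)} for every node a of Γ, and this assignment satisfies 𝕍(id_Γ) = id and 𝕍(ψ ∘ φ) = 𝕍(φ) ∘ 𝕍(ψ) for composable étale maps φ: Γ → Γ', ψ: Γ' → Γ''; that is, 𝕍 is a contravariant functor from the category of finite graphs over C with étale maps to the category of real vector spaces. -/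
/-- A directed graph: a set of edges, a set of nodes, and source/target maps. -/
structure DGraph : Type 1 where
  V : Type
  E : Type
  s : E → V
  t : E → V

/-- A map of directed graphs. -/
@[ext]
structure GraphMap (G G' : DGraph) where
  vMap : G.V → G'.V
  eMap : G.E → G'.E
  hs : ∀ e, G'.s (eMap e) = vMap (G.s e)
  ht : ∀ e, G'.t (eMap e) = vMap (G.t e)

namespace GraphMap

def id (G : DGraph) : GraphMap G G :=
  ⟨fun v => v, fun e => e, fun _ => rfl, fun _ => rfl⟩

def comp {G₁ G₂ G₃ : DGraph} (g : GraphMap G₂ G₃) (f : GraphMap G₁ G₂) :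
    GraphMap G₁ G₃ where
  vMap v := g.vMap (f.vMap v)
  eMap e := g.eMap (f.eMap e)
  hs e := by rw [g.hs, f.hs]
  ht e := by rw [g.ht, f.ht]

end GraphMap

/-- A graph colored by the graph `C`, i.e. a graph together with a map of graphs to `C`. -/
structure CGraph (C : DGraph) : Type 1 where
  gr : DGraph
  col : GraphMap gr C

/-- A map of graphs over `C`. -/
@[ext]
structure CMap {C : DGraph} (Γ Γ' : CGraph C) where
  toMap : GraphMap Γ.gr Γ'.gr
  hv : ∀ v, Γ'.col.vMap (toMap.vMap v) = Γ.col.vMap v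
  he : ∀ e, Γ'.col.eMap (toMap.eMap e) = Γ.col.eMap e

namespace CMap

variable {C : DGraph}

def id (Γ : CGraph C) : CMap Γ Γ := ⟨GraphMap.id _, fun _ => rfl, fun _ => rfl⟩

def comp {Γ₁ Γ₂ Γ₃ : CGraph C} (g : CMap Γ₂ Γ₃) (f : CMap Γ₁ Γ₂) : CMap Γ₁ Γ₃ where
  toMap := g.toMap.comp f.toMap
  hv v := by
    show Γ₃.col.vMap (g.toMap.vMap (f.toMap.vMap v)) = Γ₁.col.vMap v
    rw [g.hv, f.hv]
  he e := by
    show Γ₃.col.eMap (g.toMap.eMap (f.toMap.eMap e)) = Γ₁.col.eMap e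
    rw [g.he, f.he]

/-- A map of graphs over `C` is an isomorphism iff it is bijective on nodes and edges. -/
def IsIso {Γ Γ' : CGraph C} (φ : CMap Γ Γ') : Prop :=
  Function.Bijective φ.toMap.vMap ∧ Function.Bijective φ.toMap.eMap

theorem isIso_id (Γ : CGraph C) : (CMap.id Γ).IsIso :=
  ⟨Function.bijective_id, Function.bijective_id⟩

theorem IsIso.comp {Γ₁ Γ₂ Γ₃ : CGraph C} {g : CMap Γ₂ Γ₃} {f : CMap Γ₁ Γ₂}
    (hg : g.IsIso) (hf : f.IsIso) : (g.comp f).IsIso :=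
  ⟨hg.1.comp hf.1, hg.2.comp hf.2⟩

end CMap

variable {C : DGraph}

/-- The set of edges of `Γ` with target `a`; these are both the edges and the
leaves of the input tree `I(a)`. -/
abbrev inEdge (Γ : CGraph C) (a : Γ.gr.V) : Type := {e : Γ.gr.E // Γ.gr.t e = a}

/-- The input tree `I(a)` of a node `a` of a graph `Γ` over `C`, as a graph over `C`. -/
def inTree (Γ : CGraph C) (a : Γ.gr.V) : CGraph C where
  gr :=
    { V := Unit ⊕ inEdge Γ a
      E := inEdge Γ a
      s := Sum.inr
      t := fun _ => Sum.inl () }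
  col :=
    { vMap := Sum.elim (fun _ => Γ.col.vMap a) (fun e => Γ.col.vMap (Γ.gr.s e.1))
      eMap := fun e => Γ.col.eMap e.1
      hs := fun e => Γ.col.hs e.1
      ht := fun e => by
        show C.t (Γ.col.eMap e.1) = Γ.col.vMap a
        rw [Γ.col.ht e.1, e.2] }

/-- The edge map `I(a) → I(φ(a))` induced by a map `φ` of graphs over `C`. -/
def liftEdge {Γ Γ' : CGraph C} (φ : CMap Γ Γ') (a : Γ.gr.V) (e : inEdge Γ a) :
    inEdge Γ' (φ.toMap.vMap a) :=
  ⟨φ.toMap.eMap e.1, by rw [φ.toMap.ht, e.2]⟩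

/-- The map of input trees `φ_a : I(a) → I(φ(a))` induced by a map `φ` of graphs over `C`. -/
def inMap {Γ Γ' : CGraph C} (φ : CMap Γ Γ') (a : Γ.gr.V) :
    CMap (inTree Γ a) (inTree Γ' (φ.toMap.vMap a)) where
  toMap :=
    { vMap := Sum.elim (fun _ => Sum.inl ()) (fun e => Sum.inr (liftEdge φ a e))
      eMap := liftEdge φ a
      hs := fun _ => rfl
      ht := fun _ => rfl }
  hv v := by
    cases v with
    | inl u => exact φ.hv a
    | inr e =>
      show Γ'.col.vMap (Γ'.gr.s (φ.toMap.eMap e.1)) = Γ.col.vMap (Γ.gr.s e.1)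
      rw [φ.toMap.hs, φ.hv]
  he e := φ.he e.1

/-- A map of graphs over `C` is *étale* if the induced maps of input trees are all
isomorphisms of graphs over `C`. -/
def IsEtale {Γ Γ' : CGraph C} (φ : CMap Γ Γ') : Prop :=
  ∀ a : Γ.gr.V, (inMap φ a).IsIso

section TreeLemmas

variable {Γ Γ' : CGraph C} {a : Γ.gr.V} {b : Γ'.gr.V}

theorem CMap.vMap_inr (σ : CMap (inTree Γ a) (inTree Γ' b)) (e : inEdge Γ a) :
    σ.toMap.vMap (Sum.inr e) = Sum.inr (σ.toMap.eMap e) :=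
  (σ.toMap.hs e).symm

/-- Maps of input trees preserve the colors of the sources of the leaves. -/
theorem leafColor (σ : CMap (inTree Γ a) (inTree Γ' b)) (e : inEdge Γ a) :
    Γ'.col.vMap (Γ'.gr.s (σ.toMap.eMap e).1) = Γ.col.vMap (Γ.gr.s e.1) := by
  have h := σ.hv (Sum.inr e)
  rw [CMap.vMap_inr] at h
  exact h

/-- An isomorphism of input trees maps the root to the root. -/
theorem rootFixed (σ : CMap (inTree Γ a) (inTree Γ' b)) (hσ : σ.IsIso) :
    σ.toMap.vMap (Sum.inl ()) = Sum.inl () := by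
  rcases h : σ.toMap.vMap (Sum.inl ()) with u | e'
  · cases u; rfl
  · obtain ⟨e, rfl⟩ := hσ.2.2 e'
    have ht : (Sum.inl () : Unit ⊕ inEdge Γ' b) = σ.toMap.vMap (Sum.inl ()) := σ.toMap.ht e
    rw [h] at ht
    exact absurd ht Sum.inl_ne_inr

/-- An isomorphism of input trees preserves the color of the root. -/
theorem rootColor (σ : CMap (inTree Γ a) (inTree Γ' b)) (hσ : σ.IsIso) :
    Γ'.col.vMap b = Γ.col.vMap a := by
  have h := σ.hv (Sum.inl ())
  rw [rootFixed σ hσ] at h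
  exact h

end TreeLemmas

/-! ### Phase spaces and control systems (Euclidean case) -/

set_option linter.unusedSectionVars false

variable (P : C.V → Type)
variable [∀ c, NormedAddCommGroup (P c)] [∀ c, NormedSpace ℝ (P c)]
  [∀ c, FiniteDimensional ℝ (P c)]

/-- Transport along an equality of colors. -/
def pcast {c c' : C.V} (h : c = c') : P c ≃ₗ[ℝ] P c' := by
  subst h; exact LinearEquiv.refl ℝ (P c)

/-- The (linear) map `ℙ f : ℙ X → ℙ Y` induced by a map `f : Y → X` of sets over the
set of colors. -/
def phasePull {X Y : Type} (α : X → C.V) (β : Y → C.V) (f : Y → X)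
    (hc : ∀ y, α (f y) = β y) :
    (∀ x, P (α x)) →ₗ[ℝ] (∀ y, P (β y)) where
  toFun v y := pcast P (hc y) (v (f y))
  map_add' u v := by funext y; simp
  map_smul' r v := by funext y; simp

theorem pcast_contDiff {c c' : C.V} (h : c = c') :
    ContDiff ℝ (⊤ : ℕ∞) (pcast P h) := by
  subst h; exact contDiff_id

theorem phasePull_contDiff {X Y : Type} [Fintype X] [Fintype Y]
    (α : X → C.V) (β : Y → C.V) (f : Y → X) (hc : ∀ y, α (f y) = β y) :
    ContDiff ℝ (⊤ : ℕ∞) (phasePull P α β f hc) :=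
  contDiff_pi.2 fun y =>
    (pcast_contDiff P (hc y)).comp
      ((ContinuousLinearMap.proj (R := ℝ) (φ := fun x => P (α x)) (f y)).contDiff)

/-- The vector space of smooth maps between two Euclidean spaces, as a submodule of the
space of all maps. -/
def SmoothMaps (V W : Type) [NormedAddCommGroup V] [NormedSpace ℝ V]
    [NormedAddCommGroup W] [NormedSpace ℝ W] : Submodule ℝ (V → W) where
  carrier := {f | ContDiff ℝ (⊤ : ℕ∞) f}
  add_mem' := fun {f g} hf hg => by
    simp only [Set.mem_setOf_eq] at *
    exact hf.add hg
  zero_mem' := by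
    simp only [Set.mem_setOf_eq]
    exact contDiff_const
  smul_mem' := fun c f hf => by
    simp only [Set.mem_setOf_eq] at *
    exact hf.const_smul c

theorem mem_smoothMaps_iff {V W : Type} [NormedAddCommGroup V] [NormedSpace ℝ V]
    [NormedAddCommGroup W] [NormedSpace ℝ W] (f : V → W) :
    f ∈ SmoothMaps V W ↔ ContDiff ℝ (⊤ : ℕ∞) f := Iff.rfl

noncomputable instance instFintypeInEdge (Γ : CGraph C) [Fintype Γ.gr.E] (a : Γ.gr.V) :
    Fintype (inEdge Γ a) := Fintype.ofFinite _

/-- The phase space `ℙ(lv I(a))` of the leaves of the input tree of `a`. -/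
abbrev LeafSpace (Γ : CGraph C) (a : Γ.gr.V) : Type :=
  ∀ e : inEdge Γ a, P (Γ.col.vMap (Γ.gr.s e.1))

/-- The space of control systems associated to the input tree of a node `a`:
all smooth maps from the phase space of the leaves to the phase space of the root. -/
noncomputable def Ctrl (Γ : CGraph C) [Fintype Γ.gr.E] (a : Γ.gr.V) :
    Submodule ℝ (LeafSpace P Γ a → P (Γ.col.vMap a)) :=
  SmoothMaps _ _

/-- The map `ℙ(σ|_{lv}) : ℙ(lv I(b)) → ℙ(lv I(a))` induced by a map of input trees
`σ : I(a) → I(b)`. -/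
noncomputable def leafPull {Γ Γ' : CGraph C} [Fintype Γ.gr.E] [Fintype Γ'.gr.E]
    {a : Γ.gr.V} {b : Γ'.gr.V} (σ : CMap (inTree Γ a) (inTree Γ' b)) :
    LeafSpace P Γ' b →ₗ[ℝ] LeafSpace P Γ a :=
  phasePull P (fun e' : inEdge Γ' b => Γ'.col.vMap (Γ'.gr.s e'.1))
    (fun e : inEdge Γ a => Γ.col.vMap (Γ.gr.s e.1)) σ.toMap.eMap (leafColor σ)

theorem leafPull_contDiff {Γ Γ' : CGraph C} [Fintype Γ.gr.E] [Fintype Γ'.gr.E]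
    {a : Γ.gr.V} {b : Γ'.gr.V} (σ : CMap (inTree Γ a) (inTree Γ' b)) :
    ContDiff ℝ (⊤ : ℕ∞) (leafPull P σ) :=
  phasePull_contDiff P _ _ _ _

/-- The action `Ctrl(σ) X = X ∘ ℙ(σ|_{lv})` of an isomorphism of input trees on
control systems. -/
noncomputable def ctrlMap {Γ Γ' : CGraph C} [Fintype Γ.gr.E] [Fintype Γ'.gr.E]
    {a : Γ.gr.V} {b : Γ'.gr.V}
    (σ : CMap (inTree Γ a) (inTree Γ' b)) (hσ : σ.IsIso) :
    ↥(Ctrl P Γ a) →ₗ[ℝ] ↥(Ctrl P Γ' b) where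
  toFun X :=
    ⟨fun v => pcast P (rootColor σ hσ).symm (X.1 (leafPull P σ v)),
      by
        have hX : ContDiff ℝ (⊤ : ℕ∞) X.1 := X.2
        exact (pcast_contDiff P (rootColor σ hσ).symm).comp
          (hX.comp (leafPull_contDiff P σ))⟩
  map_add' X Y := by
    apply Subtype.ext
    funext v
    simp
  map_smul' r X := by
    apply Subtype.ext
    funext v
    simp

/-- The space of virtual groupoid-invariant vector fields on a finite graph over `C`:
the invariants (limit) of the action of the symmetry groupoid `G(Γ)` on the spaces of
control systems of the input trees. -/
noncomputable def VSpace (Γ : CGraph C) [Fintype Γ.gr.E] :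
    Submodule ℝ (∀ a : Γ.gr.V, ↥(Ctrl P Γ a)) where
  carrier := {X | ∀ (a b : Γ.gr.V) (σ : CMap (inTree Γ a) (inTree Γ b)) (hσ : σ.IsIso),
    ctrlMap P σ hσ (X a) = X b}
  add_mem' := fun hX hY a b σ hσ => by
    simp only [Set.mem_setOf_eq] at *
    simp only [Pi.add_apply, map_add]
    rw [hX a b σ hσ, hY a b σ hσ]
  zero_mem' := fun a b σ hσ => by simp
  smul_mem' := fun r X hX a b σ hσ => by
    simp only [Set.mem_setOf_eq] at *
    simp only [Pi.smul_apply, map_smul]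
    rw [hX a b σ hσ]

/-- The canonical projection `ϖ_a : 𝕍(Γ) → Ctrl(I(a))`. -/
noncomputable def Vproj (Γ : CGraph C) [Fintype Γ.gr.E] (a : Γ.gr.V) :
    ↥(VSpace P Γ) →ₗ[ℝ] ↥(Ctrl P Γ a) :=
  (LinearMap.proj a).comp (VSpace P Γ).subtype

/-- The total phase space `ℙ Γ₀` of a graph over `C`. -/
abbrev TotalPhase (Γ : CGraph C) : Type := ∀ a : Γ.gr.V, P (Γ.col.vMap a)

/-- The map `ℙ(ξ|_{lv I(a)}) : ℙ Γ₀ → ℙ lv I(a)` induced by the canonical map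
`ξ : I(a) → Γ`. -/
noncomputable def leafRestrict (Γ : CGraph C) [Fintype Γ.gr.E] (a : Γ.gr.V) :
    TotalPhase P Γ →ₗ[ℝ] LeafSpace P Γ a :=
  phasePull P Γ.col.vMap (fun e : inEdge Γ a => Γ.col.vMap (Γ.gr.s e.1))
    (fun e : inEdge Γ a => Γ.gr.s e.1) (fun _ => rfl)

/-- The space of (smooth) vector fields on the total phase space of `Γ`. -/
noncomputable def VF (Γ : CGraph C) [Fintype Γ.gr.V] :
    Submodule ℝ (TotalPhase P Γ → TotalPhase P Γ) :=
  SmoothMaps _ _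

/-- The map `S_Γ` sending a virtual groupoid-invariant vector field to an actual
vector field on the phase space `ℙ Γ₀`; its component at a node `a` is
`ϖ_a(v) ∘ ℙ(ξ|_{lv I(a)})`. -/
noncomputable def SMap (Γ : CGraph C) [Fintype Γ.gr.E] [Fintype Γ.gr.V] :
    ↥(VSpace P Γ) →ₗ[ℝ] ↥(VF P Γ) where
  toFun v :=
    ⟨fun x a => (v.1 a).1 (leafRestrict P Γ a x),
      contDiff_pi.2 fun a =>
        ContDiff.comp (show ContDiff ℝ (⊤ : ℕ∞) (v.1 a).1 from (v.1 a).2)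
          (phasePull_contDiff P _ _ _ _)⟩
  map_add' u v := by
    apply Subtype.ext
    funext x a
    simp
  map_smul' r v := by
    apply Subtype.ext
    funext x a
    simp

/-! ### Identity and composition of étale maps -/

theorem sumElim_bij {A B : Type} {g : A → B} (hg : Function.Bijective g) :
    Function.Bijective
      (Sum.elim (fun _ : Unit => (Sum.inl () : Unit ⊕ B)) (fun a => Sum.inr (g a))) := by
  constructor
  · intro x y hxy
    cases x with
    | inl u =>
      cases y with
      | inl u' => cases u; cases u'; rfl
      | inr a => exact absurd hxy (by simp)
    | inr a =>
      cases y with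
      | inl u => exact absurd hxy (by simp)
      | inr a' =>
        simp only [Sum.elim_inr, Sum.inr.injEq] at hxy
        exact congrArg Sum.inr (hg.1 hxy)
  · intro y
    cases y with
    | inl u => exact ⟨Sum.inl (), by cases u; rfl⟩
    | inr b =>
      obtain ⟨a, rfl⟩ := hg.2 b
      exact ⟨Sum.inr a, rfl⟩

theorem isEtale_id (Γ : CGraph C) : IsEtale (CMap.id Γ) := fun a => by
  have he : Function.Bijective (liftEdge (CMap.id Γ) a) := by
    have h : liftEdge (CMap.id Γ) a = fun e => e := funext fun e => Subtype.ext rfl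
    rw [h]
    exact Function.bijective_id
  exact ⟨sumElim_bij he, he⟩

theorem isEtale_comp {Γ₁ Γ₂ Γ₃ : CGraph C} {g : CMap Γ₂ Γ₃} {f : CMap Γ₁ Γ₂}
    (hg : IsEtale g) (hf : IsEtale f) : IsEtale (g.comp f) := fun a => by
  have he : Function.Bijective (liftEdge (g.comp f) a) := by
    have h : liftEdge (g.comp f) a =
        fun e => liftEdge g (f.toMap.vMap a) (liftEdge f a e) :=
      funext fun e => Subtype.ext rfl
    rw [h]
    exact Function.Bijective.comp (hg (f.toMap.vMap a)).2 (hf a).2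
  exact ⟨sumElim_bij he, he⟩


/-! Isomorphisms of input trees form a groupoid on which `Ctrl` acts functorially, so each
`Ctrl(φ_a)` of an étale `φ` is a linear isomorphism. Define `𝕍(φ) w` at `a` as
`Ctrl(φ_a)⁻¹ (w_{φ a})`; it is again invariant, because a symmetry `σ : I(a) ≅ I(b)` of `Γ`
conjugates to the symmetry `φ_b ∘ σ ∘ φ_a⁻¹` of `Γ'`, under which `w` is invariant.
Uniqueness is the injectivity of the `Ctrl(φ_a)`, and functoriality follows from uniqueness
since `(ψ ∘ φ)_a = ψ_{φ a} ∘ φ_a`. -/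

section InputTrees

variable {Γ Γ' : CGraph C} {a : Γ.gr.V} {b : Γ'.gr.V}

theorem CMap.IsIso.inTree_ext {σ τ : CMap (inTree Γ a) (inTree Γ' b)} (hσ : σ.IsIso)
    (hτ : τ.IsIso) (h : ∀ e, σ.toMap.eMap e = τ.toMap.eMap e) : σ = τ := by
  refine CMap.ext (GraphMap.ext (funext fun v => ?_) (funext h))
  rcases v with ⟨⟩ | e
  · rw [rootFixed σ hσ, rootFixed τ hτ]
  · rw [CMap.vMap_inr, CMap.vMap_inr]
    exact congrArg Sum.inr (h e)

noncomputable def invTree (σ : CMap (inTree Γ a) (inTree Γ' b)) (hσ : σ.IsIso) :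
    CMap (inTree Γ' b) (inTree Γ a) :=
  let f := Equiv.ofBijective σ.toMap.eMap hσ.2
  { toMap :=
      { vMap := Sum.elim (fun _ => Sum.inl ()) (fun e => Sum.inr (f.symm e))
        eMap := f.symm
        hs := fun _ => rfl
        ht := fun _ => rfl }
    hv := by
      rintro (⟨⟩ | e)
      · exact (rootColor σ hσ).symm
      · have h := leafColor σ (f.symm e)
        rw [show σ.toMap.eMap (f.symm e) = e from f.apply_symm_apply e] at h
        exact h.symm
    he := fun e => by
      have h := σ.he (f.symm e)
      rw [show σ.toMap.eMap (f.symm e) = e from f.apply_symm_apply e] at h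
      exact h.symm }

theorem invTree_isIso (σ : CMap (inTree Γ a) (inTree Γ' b)) (hσ : σ.IsIso) :
    (invTree σ hσ).IsIso :=
  have he := (Equiv.ofBijective σ.toMap.eMap hσ.2).symm.bijective
  ⟨sumElim_bij he, he⟩

theorem invTree_comp (σ : CMap (inTree Γ a) (inTree Γ' b)) (hσ : σ.IsIso) :
    (invTree σ hσ).comp σ = CMap.id (inTree Γ a) :=
  ((invTree_isIso σ hσ).comp hσ).inTree_ext (CMap.isIso_id _)
    (Equiv.ofBijective σ.toMap.eMap hσ.2).symm_apply_apply

theorem comp_invTree (σ : CMap (inTree Γ a) (inTree Γ' b)) (hσ : σ.IsIso) :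
    σ.comp (invTree σ hσ) = CMap.id (inTree Γ' b) :=
  (hσ.comp (invTree_isIso σ hσ)).inTree_ext (CMap.isIso_id _)
    (Equiv.ofBijective σ.toMap.eMap hσ.2).apply_symm_apply

theorem inMap_comp {Γ'' : CGraph C} (φ : CMap Γ Γ') (ψ : CMap Γ' Γ'') (a : Γ.gr.V) :
    inMap (ψ.comp φ) a = (inMap ψ (φ.toMap.vMap a)).comp (inMap φ a) := by
  refine CMap.ext (GraphMap.ext (funext fun v => ?_) rfl)
  rcases v with ⟨⟩ | e <;> rfl

end InputTrees

section ControlSystems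

variable {Γ Γ' Γ'' : CGraph C} [Fintype Γ.gr.E] [Fintype Γ'.gr.E] [Fintype Γ''.gr.E]
  {a : Γ.gr.V} {b : Γ'.gr.V} {c : Γ''.gr.V}

theorem pcast_pcast {c₁ c₂ c₃ : C.V} (h : c₁ = c₂) (h' : c₂ = c₃) (x : P c₁) :
    pcast P h' (pcast P h x) = pcast P (h.trans h') x := by
  subst h h'
  rfl

theorem leafPull_comp (σ : CMap (inTree Γ a) (inTree Γ' b))
    (τ : CMap (inTree Γ' b) (inTree Γ'' c)) (v : LeafSpace P Γ'' c) :
    leafPull P (τ.comp σ) v = leafPull P σ (leafPull P τ v) :=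
  funext fun _ => (pcast_pcast P _ _ _).symm

theorem ctrlMap_id (X : Ctrl P Γ a) :
    ctrlMap P (CMap.id (inTree Γ a)) (CMap.isIso_id _) X = X :=
  rfl

theorem ctrlMap_comp (σ : CMap (inTree Γ a) (inTree Γ' b))
    (τ : CMap (inTree Γ' b) (inTree Γ'' c)) (hσ : σ.IsIso) (hτ : τ.IsIso) (X : Ctrl P Γ a) :
    ctrlMap P (τ.comp σ) (hτ.comp hσ) X = ctrlMap P τ hτ (ctrlMap P σ hσ X) := by
  refine Subtype.ext (funext fun v => ?_)
  change pcast P _ (X.1 (leafPull P (τ.comp σ) v)) =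
    pcast P _ (pcast P _ (X.1 (leafPull P σ (leafPull P τ v))))
  rw [pcast_pcast, leafPull_comp]

theorem ctrlMap_congr {σ τ : CMap (inTree Γ a) (inTree Γ' b)} (h : σ = τ) (hσ : σ.IsIso)
    (hτ : τ.IsIso) : ctrlMap P σ hσ = ctrlMap P τ hτ := by
  subst h
  rfl

noncomputable def ctrlEquiv (σ : CMap (inTree Γ a) (inTree Γ' b)) (hσ : σ.IsIso) :
    Ctrl P Γ a ≃ₗ[ℝ] Ctrl P Γ' b :=
  LinearEquiv.ofLinearMap (ctrlMap P σ hσ) (ctrlMap P (invTree σ hσ) (invTree_isIso σ hσ))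
    (LinearMap.ext fun Y => by
      rw [LinearMap.comp_apply, ← ctrlMap_comp,
        ctrlMap_congr P (comp_invTree σ hσ) _ (CMap.isIso_id _), ctrlMap_id,
        LinearMap.id_apply])
    (LinearMap.ext fun X => by
      rw [LinearMap.comp_apply, ← ctrlMap_comp,
        ctrlMap_congr P (invTree_comp σ hσ) _ (CMap.isIso_id _), ctrlMap_id,
        LinearMap.id_apply])

theorem ctrlEquiv_apply (σ : CMap (inTree Γ a) (inTree Γ' b)) (hσ : σ.IsIso)
    (X : Ctrl P Γ a) : ctrlEquiv P σ hσ X = ctrlMap P σ hσ X :=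
  rfl

theorem ctrlEquiv_symm_apply (σ : CMap (inTree Γ a) (inTree Γ' b)) (hσ : σ.IsIso)
    (Y : Ctrl P Γ' b) :
    (ctrlEquiv P σ hσ).symm Y = ctrlMap P (invTree σ hσ) (invTree_isIso σ hσ) Y :=
  rfl

end ControlSystems

section Pullback

variable {Γ Γ' Γ'' : CGraph C} [Fintype Γ.gr.E] [Fintype Γ'.gr.E] [Fintype Γ''.gr.E]

theorem ctrlMap_eq_of_mem_VSpace {w : ∀ a : Γ.gr.V, Ctrl P Γ a} (hw : w ∈ VSpace P Γ)
    {a b : Γ.gr.V} (σ : CMap (inTree Γ a) (inTree Γ b)) (hσ : σ.IsIso) :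
    ctrlMap P σ hσ (w a) = w b :=
  hw a b σ hσ

theorem pullback_mem_VSpace (φ : CMap Γ Γ') (hφ : IsEtale φ) (w : VSpace P Γ') :
    (fun a => (ctrlEquiv P (inMap φ a) (hφ a)).symm (w.1 (φ.toMap.vMap a))) ∈ VSpace P Γ := by
  intro a b σ hσ
  beta_reduce
  rw [LinearEquiv.eq_symm_apply, ctrlEquiv_apply, ← ctrlMap_comp, ctrlEquiv_symm_apply,
    ← ctrlMap_comp]
  exact ctrlMap_eq_of_mem_VSpace P w.2 _ _

noncomputable def Vmap (φ : CMap Γ Γ') (hφ : IsEtale φ) : VSpace P Γ' →ₗ[ℝ] VSpace P Γ :=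
  LinearMap.codRestrict (VSpace P Γ)
    (LinearMap.pi fun a => (ctrlEquiv P (inMap φ a) (hφ a)).symm.toLinearMap ∘ₗ
      Vproj P Γ' (φ.toMap.vMap a))
    (pullback_mem_VSpace P φ hφ)

theorem ctrlMap_Vproj_Vmap (φ : CMap Γ Γ') (hφ : IsEtale φ) (a : Γ.gr.V) (w : VSpace P Γ') :
    ctrlMap P (inMap φ a) (hφ a) (Vproj P Γ a (Vmap P φ hφ w)) =
      Vproj P Γ' (φ.toMap.vMap a) w :=
  (ctrlEquiv P (inMap φ a) (hφ a)).apply_symm_apply _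

theorem eq_Vmap (φ : CMap Γ Γ') (hφ : IsEtale φ) (L : VSpace P Γ' →ₗ[ℝ] VSpace P Γ)
    (hL : ∀ a w, ctrlMap P (inMap φ a) (hφ a) (Vproj P Γ a (L w)) =
      Vproj P Γ' (φ.toMap.vMap a) w) :
    L = Vmap P φ hφ :=
  LinearMap.ext fun w => Subtype.ext <| funext fun a =>
    (ctrlEquiv P (inMap φ a) (hφ a)).injective <|
      (hL a w).trans (ctrlMap_Vproj_Vmap P φ hφ a w).symm

theorem Vmap_id : Vmap P (CMap.id Γ) (isEtale_id Γ) = LinearMap.id :=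
  (eq_Vmap P _ _ _ fun _ w => ctrlMap_eq_of_mem_VSpace P w.2 _ _).symm

theorem Vmap_comp (φ : CMap Γ Γ') (ψ : CMap Γ' Γ'') (hφ : IsEtale φ) (hψ : IsEtale ψ) :
    Vmap P (ψ.comp φ) (isEtale_comp hψ hφ) = (Vmap P φ hφ).comp (Vmap P ψ hψ) := by
  refine (eq_Vmap P _ _ _ fun a w => ?_).symm
  refine (LinearMap.congr_fun (ctrlMap_congr P (inMap_comp φ ψ a) _ _) _).trans
    ((ctrlMap_comp P _ _ (hφ a) (hψ _) _).trans ?_)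
  rw [LinearMap.comp_apply, ctrlMap_Vproj_Vmap, ctrlMap_Vproj_Vmap]
  rfl

end Pullback

/-- For every étale map `φ : Γ → Γ'` of finite graphs over `C` there
is a unique linear map `𝕍(φ) : 𝕍(Γ') → 𝕍(Γ)` satisfying
`Ctrl(φ_a)(ϖ_a(𝕍(φ) w)) = ϖ_{φ(a)}(w)` (i.e. `ϖ_a ∘ 𝕍(φ) = Ctrl(φ_a)⁻¹ ∘ ϖ_{φ(a)}`)
for every node `a` of `Γ`, and this assignment is a contravariant functor: it sends
identities to identities and compositions to reversed compositions. -/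
theorem V_extends_to_contravariant_functor {C : DGraph} (P : C.V → Type)
    [∀ c, NormedAddCommGroup (P c)] [∀ c, NormedSpace ℝ (P c)]
    [∀ c, FiniteDimensional ℝ (P c)] :
    ∃ V : ∀ (Γ Γ' : CGraph C) [Fintype Γ.gr.E] [Fintype Γ'.gr.E]
        (φ : CMap Γ Γ'), IsEtale φ → (↥(VSpace P Γ') →ₗ[ℝ] ↥(VSpace P Γ)),
      (∀ (Γ Γ' : CGraph C) [Fintype Γ.gr.E] [Fintype Γ'.gr.E]
          (φ : CMap Γ Γ') (hφ : IsEtale φ),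
        (∀ (a : Γ.gr.V) (w : ↥(VSpace P Γ')),
          ctrlMap P (inMap φ a) (hφ a) (Vproj P Γ a (V Γ Γ' φ hφ w)) =
            Vproj P Γ' (φ.toMap.vMap a) w) ∧
        (∀ L : ↥(VSpace P Γ') →ₗ[ℝ] ↥(VSpace P Γ),
          (∀ (a : Γ.gr.V) (w : ↥(VSpace P Γ')),
            ctrlMap P (inMap φ a) (hφ a) (Vproj P Γ a (L w)) =
              Vproj P Γ' (φ.toMap.vMap a) w) → L = V Γ Γ' φ hφ)) ∧
      (∀ (Γ : CGraph C) [Fintype Γ.gr.E],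
        V Γ Γ (CMap.id Γ) (isEtale_id Γ) = LinearMap.id) ∧
      (∀ (Γ₁ Γ₂ Γ₃ : CGraph C) [Fintype Γ₁.gr.E] [Fintype Γ₂.gr.E] [Fintype Γ₃.gr.E]
          (φ : CMap Γ₁ Γ₂) (ψ : CMap Γ₂ Γ₃) (hφ : IsEtale φ) (hψ : IsEtale ψ),
        V Γ₁ Γ₃ (ψ.comp φ) (isEtale_comp hψ hφ) =
          (V Γ₁ Γ₂ φ hφ).comp (V Γ₂ Γ₃ ψ hψ)) :=
  ⟨fun _ _ _ _ φ hφ => Vmap P φ hφ,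
    fun _ _ _ _ φ hφ => ⟨ctrlMap_Vproj_Vmap P φ hφ, eq_Vmap P φ hφ⟩,
    fun _ _ => Vmap_id P,
    fun _ _ _ _ _ _ φ ψ hφ hψ => Vmap_comp P φ ψ hφ hψ⟩
end

section
/- Fix a directed graph C and a phase space function 𝒫: C₀ → Euc. Let H be the group of automorphisms of a finite colored graph Γ → C (isomorphisms of Γ with itself over C), acting on the phase space ℙΓ₀ by the linear maps ℙh, h ∈ H. Then the image S_Γ(𝕍(Γ)) of the space of virtual groupoid-invariant vector fields under S_Γ is contained in the space χ(ℙΓ₀)^H of H-invariant vector fields: for every v ∈ 𝕍(Γ) and every h ∈ H, ℙh ∘ S_Γ(v) = S_Γ(v) ∘ ℙh. -/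
variable {C : DGraph}

/-! ### Phase spaces and control systems (Euclidean case) -/

set_option linter.unusedSectionVars false

variable (P : C.V → Type)
variable [∀ c, NormedAddCommGroup (P c)] [∀ c, NormedSpace ℝ (P c)]
  [∀ c, FiniteDimensional ℝ (P c)]

/-- The map `ℙ φ : ℙ Γ'₀ → ℙ Γ₀` on total phase spaces induced by a map
`φ : Γ → Γ'` of graphs over `C`.  It is linear. -/
noncomputable def totalPull {Γ Γ' : CGraph C} (φ : CMap Γ Γ') :
    TotalPhase P Γ' →ₗ[ℝ] TotalPhase P Γ :=
  phasePull P Γ'.col.vMap Γ.col.vMap φ.toMap.vMap φ.hv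

/-! An automorphism `h` of `Γ` is étale, so it induces isomorphisms of input trees
`I(a) → I(h a)`. Invariance of `v` under these groupoid morphisms rewrites the component
of `S_Γ(v)` at `h a` as the component at `a` precomposed with the induced map of leaf
spaces, and that map intertwines the leaf restrictions of `ℙΓ₀` with `ℙh`. -/

section Automorphisms

variable {C : DGraph} {Γ Γ' : CGraph C}

theorem CMap.IsIso.liftEdge_bijective {φ : CMap Γ Γ'} (hφ : φ.IsIso) (a : Γ.gr.V) :
    Function.Bijective (liftEdge φ a) := by
  refine ⟨fun e e' hee' => Subtype.ext (hφ.2.1 (congrArg Subtype.val hee')), ?_⟩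
  rintro ⟨e', he'⟩
  obtain ⟨e, rfl⟩ := hφ.2.2 e'
  have hte : Γ.gr.t e = a := hφ.1.1 (by rw [← φ.toMap.ht e, he'])
  exact ⟨⟨e, hte⟩, rfl⟩

theorem CMap.IsIso.isEtale {φ : CMap Γ Γ'} (hφ : φ.IsIso) : IsEtale φ := by
  intro a
  have hlift := hφ.liftEdge_bijective a
  refine ⟨⟨?_, ?_⟩, hlift⟩
  · rintro (⟨⟩ | e) (⟨⟩ | e') hee'
    · rfl
    · exact absurd hee' Sum.inl_ne_inr
    · exact absurd hee' Sum.inr_ne_inl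
    · rw [hlift.1 (Sum.inr_injective hee')]
  · rintro (⟨⟩ | e')
    · exact ⟨Sum.inl (), rfl⟩
    · obtain ⟨e, rfl⟩ := hlift.2 e'
      exact ⟨Sum.inr e, rfl⟩

end Automorphisms

section PhaseSpaces

variable {C : DGraph} (P : C.V → Type)
  [∀ c, NormedAddCommGroup (P c)] [∀ c, NormedSpace ℝ (P c)]

theorem pcast_trans {c c' c'' : C.V} (h₁ : c = c') (h₂ : c' = c'') (y : P c) :
    pcast P h₂ (pcast P h₁ y) = pcast P (h₁.trans h₂) y := by
  subst h₁ h₂; rfl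

theorem pcast_self {c : C.V} (h : c = c) (y : P c) : pcast P h y = y := rfl

theorem pcast_apply_congr {X : Type} {α : X → C.V} (v : ∀ x, P (α x)) {x x' : X}
    (hx : x = x') {c : C.V} (h : α x = c) (h' : α x' = c) :
    pcast P h (v x) = pcast P h' (v x') := by
  subst hx; rfl

theorem leafPull_inMap_leafRestrict {Γ Γ' : CGraph C} [Fintype Γ.gr.E] [Fintype Γ'.gr.E]
    (φ : CMap Γ Γ') (a : Γ.gr.V) (x : TotalPhase P Γ') :
    leafPull P (inMap φ a) (leafRestrict P Γ' (φ.toMap.vMap a) x)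
      = leafRestrict P Γ a (totalPull P φ x) := by
  funext e
  simp only [leafPull, leafRestrict, totalPull, phasePull, LinearMap.coe_mk, AddHom.coe_mk,
    pcast_trans]
  exact pcast_apply_congr P x (φ.toMap.hs e.1) _ _

theorem VSpace.eval_eq_of_isIso [∀ c, FiniteDimensional ℝ (P c)] {Γ : CGraph C}
    [Fintype Γ.gr.E] (v : VSpace P Γ) {a b : Γ.gr.V} (σ : CMap (inTree Γ a) (inTree Γ b))
    (hσ : σ.IsIso) (w : LeafSpace P Γ b) :
    (v.1 b).1 w = pcast P (rootColor σ hσ).symm ((v.1 a).1 (leafPull P σ w)) := by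
  rw [← v.2 a b σ hσ]; rfl

end PhaseSpaces

/-- **Statement 13.** Let `H` be the group of automorphisms of a finite colored graph
`Γ → C`, acting on the phase space `ℙΓ₀` by the linear maps `ℙh`.  Then the image
`S_Γ(𝕍(Γ))` of the space of virtual groupoid-invariant vector fields is contained in
the space of `H`-invariant vector fields: for every `v ∈ 𝕍(Γ)` and every
automorphism `h` of `Γ` over `C`, `ℙh ∘ S_Γ(v) = S_Γ(v) ∘ ℙh`. -/
theorem groupoid_invariant_vector_fields_are_group_invariant {C : DGraph}
    (P : C.V → Type)
    [∀ c, NormedAddCommGroup (P c)] [∀ c, NormedSpace ℝ (P c)]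
    [∀ c, FiniteDimensional ℝ (P c)]
    (Γ : CGraph C) [Fintype Γ.gr.E] [Fintype Γ.gr.V]
    (v : ↥(VSpace P Γ)) (h : CMap Γ Γ) (hh : h.IsIso) :
    ∀ x : TotalPhase P Γ,
      totalPull P h ((SMap P Γ v).1 x) = (SMap P Γ v).1 (totalPull P h x) := by
  intro x
  funext a
  calc totalPull P h ((SMap P Γ v).1 x) a
      = pcast P (h.hv a) ((v.1 (h.toMap.vMap a)).1 (leafRestrict P Γ (h.toMap.vMap a) x)) := rfl
    _ = (v.1 a).1 (leafPull P (inMap h a) (leafRestrict P Γ (h.toMap.vMap a) x)) := by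
      rw [VSpace.eval_eq_of_isIso P v (inMap h a) (hh.isEtale a), pcast_trans, pcast_self]
    _ = (SMap P Γ v).1 (totalPull P h x) a := by
      rw [leafPull_inMap_leafRestrict]; rfl
end
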